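/- Let I be a finite set of items with a size function s : I → ℝ such that every item has a size in (1/4, 1] (so every item is of class B, L, or S). Let P and Q be packings of I into bins of capacity 1. Then there exists a packing Q' of I into bins of capacity 1 using at most as many nonempty bins as Q such that: (1) no bin of Q' of type BS contains a B item that lies in a bin of type BL in P, and (2) no bin of Q' of type B consists of a B item that lies in a bin of type BL in P. -/
import Mathlib


open Classical

/-- The set of items that packing `P` assigns to bin `b`. -/
noncomputable def binOf {ι β : Type*} [Fintype ι] (P : ι → β) (b : β) : Finset ι :=
  Finset.univ.filter (fun i => P i = b)

/-- `P` is a valid packing into bins of capacity 1. -/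
def IsPacking {ι β : Type*} [Fintype ι] (s : ι → ℝ) (P : ι → β) : Prop :=
  ∀ b : β, ∑ i ∈ binOf P b, s i ≤ 1

/-- A `B` (big) item has size in `(1/2, 1]`. -/
def isB {ι : Type*} (s : ι → ℝ) (i : ι) : Prop := 1 / 2 < s i ∧ s i ≤ 1

/-- An `L` (large) item has size in `(1/3, 1/2]`. -/
def isL {ι : Type*} (s : ι → ℝ) (i : ι) : Prop := 1 / 3 < s i ∧ s i ≤ 1 / 2

/-- An `S` (small) item has size in `(1/4, 1/3]`. -/
def isS {ι : Type*} (s : ι → ℝ) (i : ι) : Prop := 1 / 4 < s i ∧ s i ≤ 1 / 3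

/-- Bin `b` of packing `P` contains exactly `nb` items of class `B`, `nl` of class `L`,
`ns` of class `S` and nothing else. -/
noncomputable def BinHasType {ι β : Type*} [Fintype ι] (s : ι → ℝ) (P : ι → β) (b : β)
    (nb nl ns : ℕ) : Prop :=
  ((binOf P b).filter (fun i => isB s i)).card = nb ∧
  ((binOf P b).filter (fun i => isL s i)).card = nl ∧
  ((binOf P b).filter (fun i => isS s i)).card = ns ∧
  (binOf P b).card = nb + nl + ns

/-- Number of bins of packing `P` containing exactly `nb` `B` items, `nl` `L` items and
`ns` `S` items (and nothing else). -/
noncomputable def numBins {ι β : Type*} [Fintype ι] [DecidableEq β] (s : ι → ℝ)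
    (P : ι → β) (nb nl ns : ℕ) : ℕ :=
  ((Finset.univ.image P).filter (fun b => BinHasType s P b nb nl ns)).card

section MyAux

variable {ι β γ : Type*} [Fintype ι] [DecidableEq γ]

lemma mem_binOf {P : ι → β} {b : β} {x : ι} : x ∈ binOf P b ↔ P x = b := by
  simp [binOf]

lemma notLofB {s : ι → ℝ} {i : ι} (h : isB s i) (h' : isL s i) : False := by
  have := h.1; have := h'.2; linarith

lemma notSofB {s : ι → ℝ} {i : ι} (h : isB s i) (h' : isS s i) : False := by
  have := h.1; have := h'.2; linarith

lemma notSofL {s : ι → ℝ} {i : ι} (h : isL s i) (h' : isS s i) : False := by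
  have := h.1; have := h'.2; linarith

lemma triching {s : ι → ℝ} (hs : ∀ i, 1/4 < s i ∧ s i ≤ 1) (x : ι) :
    isB s x ∨ isL s x ∨ isS s x := by
  rcases le_or_gt (s x) (1/3) with h | h
  · exact Or.inr (Or.inr ⟨(hs x).1, h⟩)
  rcases le_or_gt (s x) (1/2) with h2 | h2
  · exact Or.inr (Or.inl ⟨h, h2⟩)
  · exact Or.inl ⟨h2, (hs x).2⟩

/-- only one `B` item in a bin with `B`-count 1 -/
lemma uniqueB {s : ι → ℝ} {P : ι → β} {b : β} {x y : ι}
    (h : ((binOf P b).filter (fun i => isB s i)).card = 1)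
    (hx : x ∈ binOf P b) (hxB : isB s x) (hy : y ∈ binOf P b) (hyB : isB s y) : x = y :=
  Finset.card_le_one.mp (le_of_eq h) x (Finset.mem_filter.mpr ⟨hx, hxB⟩)
    y (Finset.mem_filter.mpr ⟨hy, hyB⟩)

lemma bin_single {s : ι → ℝ} (hs : ∀ i, 1/4 < s i ∧ s i ≤ 1) {Q : ι → γ} {i : ι}
    (hB : isB s i) (h : BinHasType s Q (Q i) 1 0 0) : binOf Q (Q i) = {i} := by
  obtain ⟨hb, hl, hsc, _⟩ := h
  apply Finset.eq_singleton_iff_unique_mem.mpr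
  refine ⟨mem_binOf.mpr rfl, ?_⟩
  intro x hx
  rcases triching hs x with hx' | hx' | hx'
  · exact uniqueB hb hx hx' (mem_binOf.mpr rfl) hB
  · exact absurd (Finset.mem_filter.mpr ⟨hx, hx'⟩)
      (by simp [Finset.card_eq_zero.mp hl])
  · exact absurd (Finset.mem_filter.mpr ⟨hx, hx'⟩)
      (by simp [Finset.card_eq_zero.mp hsc])

lemma bin_pair {s : ι → ℝ} (hs : ∀ i, 1/4 < s i ∧ s i ≤ 1) {Q : ι → γ} {i : ι}
    (hB : isB s i) (h : BinHasType s Q (Q i) 1 0 1) :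
    ∃ j, isS s j ∧ Q j = Q i ∧ binOf Q (Q i) = {i, j} := by
  obtain ⟨hb, hl, hsc, _⟩ := h
  obtain ⟨j, hj⟩ := Finset.card_eq_one.mp hsc
  have hjmem : j ∈ (binOf Q (Q i)).filter (fun i => isS s i) := by
    rw [hj]; exact Finset.mem_singleton_self j
  obtain ⟨hjbin, hjS⟩ := Finset.mem_filter.mp hjmem
  refine ⟨j, hjS, mem_binOf.mp hjbin, ?_⟩
  apply Finset.Subset.antisymm
  · intro x hx
    rcases triching hs x with hx' | hx' | hx'
    · have := uniqueB hb hx hx' (mem_binOf.mpr rfl) hB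
      simp [this]
    · exact absurd (Finset.mem_filter.mpr ⟨hx, hx'⟩)
        (by simp [Finset.card_eq_zero.mp hl])
    · have : x ∈ ({j} : Finset ι) := hj ▸ Finset.mem_filter.mpr ⟨hx, hx'⟩
      simp_all
  · intro x hx
    rcases Finset.mem_insert.mp hx with h1 | h1
    · subst h1; exact mem_binOf.mpr rfl
    · have := Finset.mem_singleton.mp h1; subst this; exact hjbin

open Classical in
/-- Bad-configured count: `B` items in a `BL` bin of `P` whose `Q`-bin does not contain
their `L` partner. -/
noncomputable def badSet (s : ι → ℝ) (P : ι → β) (Q : ι → γ) : Finset ι :=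
  Finset.univ.filter (fun i => isB s i ∧ BinHasType s P (P i) 1 1 0 ∧
    ∀ j ∈ binOf Q (Q i), ¬ (isL s j ∧ P j = P i))

lemma mem_badSet {s : ι → ℝ} {P : ι → β} {Q : ι → γ} {i : ι} :
    i ∈ badSet s P Q ↔ isB s i ∧ BinHasType s P (P i) 1 1 0 ∧
      ∀ j ∈ binOf Q (Q i), ¬ (isL s j ∧ P j = P i) := by
  simp [badSet]

/-- A violating item belongs to `badSet`. -/
lemma violating_mem_badSet {s : ι → ℝ} {P : ι → β} {Q : ι → γ} {i : ι}
    (hB : isB s i) (hPi : BinHasType s P (P i) 1 1 0)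
    (hQi : BinHasType s Q (Q i) 1 0 1 ∨ BinHasType s Q (Q i) 1 0 0) :
    i ∈ badSet s P Q := by
  refine mem_badSet.mpr ⟨hB, hPi, ?_⟩
  have hl : ((binOf Q (Q i)).filter (fun x => isL s x)).card = 0 := by
    rcases hQi with h | h
    · exact h.2.1
    · exact h.2.1
  intro j hj hjc
  exact absurd (Finset.mem_filter.mpr ⟨hj, hjc.1⟩) (by simp [Finset.card_eq_zero.mp hl])

/-- Core lemma for the decrease of `badSet` after a swap. -/
lemma swap_badSet {s : ι → ℝ} {P : ι → β} {Q Q₂ : ι → γ} {i ℓ j : ι}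
    (hB : isB s i) (hℓL : isL s ℓ) (hℓP : P ℓ = P i)
    (hPi : BinHasType s P (P i) 1 1 0)
    (hjSL : isS s j ∨ j = ℓ)
    (hQ₂ℓ : Q₂ ℓ = Q i)
    (hfix : ∀ x, x ≠ ℓ → x ≠ j → Q₂ x = Q x) :
    badSet s P Q₂ ⊆ (badSet s P Q).erase i := by
  intro i'' h''
  obtain ⟨hB'', hP'', hcond''⟩ := mem_badSet.mp h''
  have hiℓ : i ≠ ℓ := fun h => notLofB hB (h ▸ hℓL)
  have hij : i ≠ j := by
    rcases hjSL with h | h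
    · exact fun he => notSofB hB (he ▸ h)
    · exact fun he => notLofB hB ((he.trans h) ▸ hℓL)
  have hQ₂i : Q₂ i = Q i := hfix i hiℓ hij
  -- i itself is not in badSet Q₂ : its Q₂-bin contains ℓ
  have hine : i'' ≠ i := by
    intro he
    subst he
    have hmem : ℓ ∈ binOf Q₂ (Q₂ i'') := by
      rw [mem_binOf, hQ₂ℓ, hQ₂i]
    exact hcond'' ℓ hmem ⟨hℓL, hℓP⟩
  have hi''ℓ : i'' ≠ ℓ := fun h => notLofB hB'' (h ▸ hℓL)
  have hi''j : i'' ≠ j := by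
    rcases hjSL with h | h
    · exact fun he => notSofB hB'' (he ▸ h)
    · exact fun he => notLofB hB'' ((he.trans h) ▸ hℓL)
  have hQ₂i'' : Q₂ i'' = Q i'' := hfix i'' hi''ℓ hi''j
  refine Finset.mem_erase.mpr ⟨hine, mem_badSet.mpr ⟨hB'', hP'', ?_⟩⟩
  intro j' hj' hjc'
  -- j' is an L item of i''-s P-bin sitting in the Q-bin of i''
  have hj'ℓ : j' ≠ ℓ := by
    intro he
    subst he
    -- then P i'' = P i, so i'' = i by uniqueness of the B item
    have hPP : P i'' = P i := by rw [← hjc'.2, hℓP]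
    have : i'' = i := uniqueB hPi.1
      (mem_binOf.mpr hPP) hB'' (mem_binOf.mpr rfl) hB
    exact hine this
  have hj'j : j' ≠ j := by
    rcases hjSL with h | h
    · exact fun he => notSofL hjc'.1 (he ▸ h)
    · exact fun he => hj'ℓ (he.trans h)
  have : j' ∈ binOf Q₂ (Q₂ i'') := by
    rw [mem_binOf, hfix j' hj'ℓ hj'j, hQ₂i'']
    exact mem_binOf.mp hj'
  exact hcond'' j' this hjc'

end MyAux

section MyStep

variable {ι β γ : Type*} [Fintype ι] [DecidableEq γ]

set_option linter.unusedSectionVars false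

/-- One swap step: fix a violating item, without increasing the set of used bins,
strictly decreasing `badSet`. -/
lemma swap_step {s : ι → ℝ} (hs : ∀ i, 1/4 < s i ∧ s i ≤ 1) {P : ι → β}
    (hP : IsPacking s P) {Q : ι → γ} (hQ : IsPacking s Q) {i : ι} (hB : isB s i)
    (hPi : BinHasType s P (P i) 1 1 0)
    (hQi : BinHasType s Q (Q i) 1 0 1 ∨ BinHasType s Q (Q i) 1 0 0) :
    ∃ Q₂ : ι → γ, IsPacking s Q₂ ∧ (∀ x, Q₂ x ∈ Finset.univ.image Q) ∧
      badSet s P Q₂ ⊆ (badSet s P Q).erase i := by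
  classical
  -- extract the L partner ℓ of i in P
  obtain ⟨ℓ, hℓ⟩ := Finset.card_eq_one.mp hPi.2.1
  have hℓmem : ℓ ∈ (binOf P (P i)).filter (fun x => isL s x) := by
    rw [hℓ]; exact Finset.mem_singleton_self ℓ
  have hℓbin : ℓ ∈ binOf P (P i) := (Finset.mem_filter.mp hℓmem).1
  have hℓL : isL s ℓ := (Finset.mem_filter.mp hℓmem).2
  have hℓP : P ℓ = P i := mem_binOf.mp hℓbin
  have hiℓ : i ≠ ℓ := fun h => notLofB hB (h ▸ hℓL)
  have hpos : ∀ x : ι, (0:ℝ) ≤ s x := fun x => by linarith [(hs x).1]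
  -- s i + s ℓ ≤ 1
  have hsum : s i + s ℓ ≤ 1 := by
    have h1 : ({i, ℓ} : Finset ι) ⊆ binOf P (P i) := by
      intro x hx
      rcases Finset.mem_insert.mp hx with h | h
      · subst h; exact mem_binOf.mpr rfl
      · have := Finset.mem_singleton.mp h; subst this; exact hℓbin
    have h2 := Finset.sum_le_sum_of_subset_of_nonneg h1 (fun x _ _ => hpos x)
    rw [Finset.sum_pair hiℓ] at h2
    exact h2.trans (hP (P i))
  -- the Q-bin of i contains no L item
  have hnoL : ∀ x ∈ binOf Q (Q i), ¬ isL s x := by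
    have hl : ((binOf Q (Q i)).filter (fun x => isL s x)).card = 0 := by
      rcases hQi with h | h
      · exact h.2.1
      · exact h.2.1
    intro x hx hxL
    exact absurd (Finset.mem_filter.mpr ⟨hx, hxL⟩) (by simp [Finset.card_eq_zero.mp hl])
  have hQℓ : Q ℓ ≠ Q i := fun h => hnoL ℓ (mem_binOf.mpr h) hℓL
  have hℓQbin : ℓ ∈ binOf Q (Q ℓ) := mem_binOf.mpr rfl
  rcases hQi with hBS | hBonly
  · -- BS case: bin of i in Q is {i, j} with j of class S
    obtain ⟨j, hjS, hQj, hbinQ⟩ := bin_pair hs hB hBS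
    have hij : i ≠ j := fun h => notSofB hB (h ▸ hjS)
    have hℓj : ℓ ≠ j := fun h => notSofL hℓL (h ▸ hjS)
    set Q₂ : ι → γ := fun x => if x = ℓ then Q i else if x = j then Q ℓ else Q x with hQ₂def
    have hfix : ∀ x, x ≠ ℓ → x ≠ j → Q₂ x = Q x := by
      intro x h1 h2; simp [hQ₂def, h1, h2]
    have hQ₂ℓ : Q₂ ℓ = Q i := by simp [hQ₂def]
    have hQ₂j : Q₂ j = Q ℓ := by simp [hQ₂def, hℓj.symm]
    -- bin contents after the swap
    have e1 : binOf Q₂ (Q i) = {i, ℓ} := by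
      ext x
      rw [mem_binOf]
      constructor
      · intro hx
        by_cases h1 : x = ℓ
        · simp [h1]
        by_cases h2 : x = j
        · subst h2; rw [hQ₂j] at hx; exact absurd hx hQℓ
        · rw [hfix x h1 h2] at hx
          have : x ∈ ({i, j} : Finset ι) := hbinQ ▸ mem_binOf.mpr hx
          rcases Finset.mem_insert.mp this with h | h
          · simp [h]
          · exact absurd (Finset.mem_singleton.mp h) h2
      · intro hx
        rcases Finset.mem_insert.mp hx with h | h
        · subst h; rw [hfix x hiℓ hij]
        · have := Finset.mem_singleton.mp h; subst this; exact hQ₂ℓ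
    have e2 : binOf Q₂ (Q ℓ) = insert j ((binOf Q (Q ℓ)).erase ℓ) := by
      ext x
      rw [mem_binOf]
      constructor
      · intro hx
        by_cases h1 : x = ℓ
        · subst h1; rw [hQ₂ℓ] at hx; exact absurd hx.symm hQℓ
        by_cases h2 : x = j
        · simp [h2]
        · rw [hfix x h1 h2] at hx
          exact Finset.mem_insert_of_mem (Finset.mem_erase.mpr ⟨h1, mem_binOf.mpr hx⟩)
      · intro hx
        rcases Finset.mem_insert.mp hx with h | h
        · subst h; exact hQ₂j
        · obtain ⟨h1, h2⟩ := Finset.mem_erase.mp h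
          have h3 : x ≠ j := by
            intro he; subst he
            exact hQℓ (by rw [← hQj, mem_binOf.mp h2])
          rw [hfix x h1 h3]; exact mem_binOf.mp h2
    have e3 : ∀ b, b ≠ Q i → b ≠ Q ℓ → binOf Q₂ b = binOf Q b := by
      intro b hb1 hb2
      ext x
      rw [mem_binOf, mem_binOf]
      by_cases h1 : x = ℓ
      · subst h1; rw [hQ₂ℓ]
        constructor
        · intro h; exact absurd h.symm hb1
        · intro h; exact absurd h.symm hb2
      by_cases h2 : x = j
      · subst h2; rw [hQ₂j]
        constructor
        · intro h; exact absurd h.symm hb2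
        · intro h; rw [hQj] at h; exact absurd h.symm hb1
      · rw [hfix x h1 h2]
    refine ⟨Q₂, ?_, ?_, swap_badSet hB hℓL hℓP hPi (Or.inl hjS) hQ₂ℓ hfix⟩
    · -- packing
      intro b
      by_cases hb1 : b = Q i
      · subst hb1; rw [e1, Finset.sum_pair hiℓ]; exact hsum
      by_cases hb2 : b = Q ℓ
      · subst hb2
        rw [e2]
        have hjnm : j ∉ (binOf Q (Q ℓ)).erase ℓ := by
          intro h
          exact hQℓ (by rw [← hQj, mem_binOf.mp (Finset.mem_of_mem_erase h)])
        rw [Finset.sum_insert hjnm, Finset.sum_erase_eq_sub hℓQbin]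
        have := hQ (Q ℓ)
        have h1 : s j ≤ 1/3 := hjS.2
        have h2 : 1/3 < s ℓ := hℓL.1
        linarith
      · rw [e3 b hb1 hb2]; exact hQ b
    · -- image
      intro x
      by_cases h1 : x = ℓ
      · subst h1; rw [hQ₂ℓ]; exact Finset.mem_image.mpr ⟨i, Finset.mem_univ i, rfl⟩
      by_cases h2 : x = j
      · subst h2; rw [hQ₂j]; exact Finset.mem_image.mpr ⟨ℓ, Finset.mem_univ ℓ, rfl⟩
      · rw [hfix x h1 h2]; exact Finset.mem_image.mpr ⟨x, Finset.mem_univ x, rfl⟩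
  · -- B case: bin of i in Q is {i}
    have hbinQ : binOf Q (Q i) = {i} := bin_single hs hB hBonly
    set Q₂ : ι → γ := fun x => if x = ℓ then Q i else Q x with hQ₂def
    have hfix : ∀ x, x ≠ ℓ → x ≠ ℓ → Q₂ x = Q x := by
      intro x h1 _; simp [hQ₂def, h1]
    have hQ₂ℓ : Q₂ ℓ = Q i := by simp [hQ₂def]
    have e1 : binOf Q₂ (Q i) = {i, ℓ} := by
      ext x
      rw [mem_binOf]
      constructor
      · intro hx
        by_cases h1 : x = ℓ
        · simp [h1]
        · rw [hfix x h1 h1] at hx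
          have : x ∈ ({i} : Finset ι) := hbinQ ▸ mem_binOf.mpr hx
          simp [Finset.mem_singleton.mp this]
      · intro hx
        rcases Finset.mem_insert.mp hx with h | h
        · subst h; rw [hfix x hiℓ hiℓ]
        · have := Finset.mem_singleton.mp h; subst this; exact hQ₂ℓ
    have e2 : binOf Q₂ (Q ℓ) = (binOf Q (Q ℓ)).erase ℓ := by
      ext x
      rw [mem_binOf]
      constructor
      · intro hx
        by_cases h1 : x = ℓ
        · subst h1; rw [hQ₂ℓ] at hx; exact absurd hx.symm hQℓ
        · rw [hfix x h1 h1] at hx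
          exact Finset.mem_erase.mpr ⟨h1, mem_binOf.mpr hx⟩
      · intro hx
        obtain ⟨h1, h2⟩ := Finset.mem_erase.mp hx
        rw [hfix x h1 h1]; exact mem_binOf.mp h2
    have e3 : ∀ b, b ≠ Q i → b ≠ Q ℓ → binOf Q₂ b = binOf Q b := by
      intro b hb1 hb2
      ext x
      rw [mem_binOf, mem_binOf]
      by_cases h1 : x = ℓ
      · subst h1; rw [hQ₂ℓ]
        constructor
        · intro h; exact absurd h.symm hb1
        · intro h; exact absurd h.symm hb2
      · rw [hfix x h1 h1]
    refine ⟨Q₂, ?_, ?_, swap_badSet hB hℓL hℓP hPi (Or.inr rfl) hQ₂ℓ hfix⟩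
    · intro b
      by_cases hb1 : b = Q i
      · subst hb1; rw [e1, Finset.sum_pair hiℓ]; exact hsum
      by_cases hb2 : b = Q ℓ
      · subst hb2
        rw [e2]
        have h1 := Finset.sum_le_sum_of_subset_of_nonneg
          (Finset.erase_subset ℓ (binOf Q (Q ℓ))) (fun x _ _ => hpos x)
        exact h1.trans (hQ (Q ℓ))
      · rw [e3 b hb1 hb2]; exact hQ b
    · intro x
      by_cases h1 : x = ℓ
      · subst h1; rw [hQ₂ℓ]; exact Finset.mem_image.mpr ⟨i, Finset.mem_univ i, rfl⟩
      · rw [hfix x h1 h1]; exact Finset.mem_image.mpr ⟨x, Finset.mem_univ x, rfl⟩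

end MyStep

section MyKey

variable {ι β γ : Type*} [Fintype ι] [DecidableEq γ]

set_option linter.unusedSectionVars false

lemma key_induction {s : ι → ℝ} (hs : ∀ i, 1/4 < s i ∧ s i ≤ 1) {P : ι → β}
    (hP : IsPacking s P) :
    ∀ n : ℕ, ∀ Q : ι → γ, IsPacking s Q → (badSet s P Q).card ≤ n →
    ∃ Q' : ι → γ, IsPacking s Q' ∧
      (Finset.univ.image Q').card ≤ (Finset.univ.image Q).card ∧
      (∀ i, isB s i → BinHasType s P (P i) 1 1 0 → ¬ BinHasType s Q' (Q' i) 1 0 1) ∧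
      (∀ i, isB s i → BinHasType s P (P i) 1 1 0 → ¬ BinHasType s Q' (Q' i) 1 0 0) := by
  intro n
  induction n with
  | zero =>
    intro Q hQ hcard
    refine ⟨Q, hQ, le_refl _, ?_, ?_⟩
    · intro i hB hPi hcon
      have := violating_mem_badSet hB hPi (Or.inl hcon)
      rw [Finset.card_eq_zero.mp (Nat.le_zero.mp hcard)] at this
      exact absurd this (Finset.notMem_empty i)
    · intro i hB hPi hcon
      have := violating_mem_badSet hB hPi (Or.inr hcon)
      rw [Finset.card_eq_zero.mp (Nat.le_zero.mp hcard)] at this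
      exact absurd this (Finset.notMem_empty i)
  | succ n ih =>
    intro Q hQ hcard
    by_cases hviol : ∃ i, isB s i ∧ BinHasType s P (P i) 1 1 0 ∧
        (BinHasType s Q (Q i) 1 0 1 ∨ BinHasType s Q (Q i) 1 0 0)
    · obtain ⟨i, hB, hPi, hQi⟩ := hviol
      obtain ⟨Q₂, hQ₂p, hQ₂img, hQ₂bad⟩ := swap_step hs hP hQ hB hPi hQi
      have himem : i ∈ badSet s P Q := violating_mem_badSet hB hPi hQi
      have hlt : (badSet s P Q₂).card ≤ n := by
        have h1 : (badSet s P Q₂).card ≤ ((badSet s P Q).erase i).card :=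
          Finset.card_le_card hQ₂bad
        have h2 : ((badSet s P Q).erase i).card = (badSet s P Q).card - 1 :=
          Finset.card_erase_of_mem himem
        have h3 : 1 ≤ (badSet s P Q).card := Finset.card_pos.mpr ⟨i, himem⟩
        omega
      obtain ⟨Q', hQ'p, hQ'card, hc1, hc2⟩ := ih Q₂ hQ₂p hlt
      refine ⟨Q', hQ'p, ?_, hc1, hc2⟩
      have : (Finset.univ.image Q₂ : Finset γ) ⊆ Finset.univ.image Q :=
        Finset.image_subset_iff.mpr (fun x _ => hQ₂img x)
      exact hQ'card.trans (Finset.card_le_card this)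
    · push_neg at hviol
      refine ⟨Q, hQ, le_refl _, ?_, ?_⟩
      · intro i hB hPi hcon
        exact (hviol i hB hPi).1 hcon
      · intro i hB hPi hcon
        exact (hviol i hB hPi).2 hcon

end MyKey

/-- Lemma 5 of the paper: the optimal packing can be normalized so that no `BS` bin and
no `B` bin of it contains a `B` item that `P` packs into a `BL` bin. -/
theorem opt_normalization {ι β γ : Type*} [Fintype ι] [DecidableEq β] [DecidableEq γ]
    (s : ι → ℝ) (hs : ∀ i, 1 / 4 < s i ∧ s i ≤ 1)
    (P : ι → β) (Q : ι → γ)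
    (hP : IsPacking s P) (hQ : IsPacking s Q) :
    ∃ Q' : ι → γ, IsPacking s Q' ∧
      (Finset.univ.image Q').card ≤ (Finset.univ.image Q).card ∧
      (∀ i, isB s i → BinHasType s P (P i) 1 1 0 → ¬ BinHasType s Q' (Q' i) 1 0 1) ∧
      (∀ i, isB s i → BinHasType s P (P i) 1 1 0 → ¬ BinHasType s Q' (Q' i) 1 0 0) := by
  exact key_induction hs hP (badSet s P Q).card Q hQ (le_refl _)
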